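/- arXiv:2103.13553 — 4 statements merged into one kernel-verified Lean document; each statement's English description precedes it below -/
import Mathlib

section
/- Let a ∈ ℝ^m with 0 < a_j for all j, and suppose max_j a_j ≤ k · min_j a_j for some k ≥ 1. Then for all ẑ, z ∈ ℝ^m with ẑ_j, z_j ≥ 0 and ∑_j ẑ_j > 0, we have (∑_j z_j)·(∑_j a_j(ẑ_j − z_j)) ≤ (k/4)·(∑_j ẑ_j)·(∑_j a_j ẑ_j). -/
theorem beta_core_estimate (m : ℕ) (hm : 0 < m) (a : Fin m → ℝ) (k : ℝ)
    (ha : ∀ j, 0 < a j) (hk : 1 ≤ k)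
    (hasym : ∀ j j', a j ≤ k * a j')
    (zhat z : Fin m → ℝ) (hzhat : ∀ j, 0 ≤ zhat j) (hz : ∀ j, 0 ≤ z j)
    (hpos : 0 < ∑ j, zhat j) :
    (∑ j, z j) * (∑ j, a j * (zhat j - z j)) ≤
      (k / 4) * (∑ j, zhat j) * (∑ j, a j * zhat j) := by
  haveI : NeZero m := ⟨hm.ne'⟩
  obtain ⟨j0, -, hmin⟩ := Finset.exists_min_image Finset.univ a ⟨0, Finset.mem_univ 0⟩
  set α := a j0 with hαdef
  set Z := ∑ j, zhat j with hZdef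
  set S := ∑ j, z j with hSdef
  set A := ∑ j, a j * zhat j with hAdef
  set B := ∑ j, a j * z j with hBdef
  have hα : 0 < α := ha j0
  have hS0 : 0 ≤ S := Finset.sum_nonneg fun j _ => hz j
  have hA0 : 0 ≤ A := Finset.sum_nonneg fun j _ => mul_nonneg (ha j).le (hzhat j)
  have hBge : α * S ≤ B := by
    rw [hSdef, Finset.mul_sum]
    exact Finset.sum_le_sum fun j _ =>
      mul_le_mul_of_nonneg_right (hmin j (Finset.mem_univ j)) (hz j)
  have hAle : A ≤ k * α * Z := by
    rw [hZdef, Finset.mul_sum]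
    exact Finset.sum_le_sum fun j _ =>
      mul_le_mul_of_nonneg_right (hasym j j0) (hzhat j)
  have hsplit : (∑ j, a j * (zhat j - z j)) = A - B := by
    rw [hAdef, hBdef, ← Finset.sum_sub_distrib]
    exact Finset.sum_congr rfl fun j _ => by ring
  rw [hsplit]
  have hkZ : 0 < k * Z := mul_pos (lt_of_lt_of_le one_pos hk) hpos
  nlinarith [mul_nonneg hA0 (sq_nonneg (k * Z - 2 * S)),
    mul_le_mul_of_nonneg_right hBge hS0,
    mul_le_mul_of_nonneg_right hAle (mul_nonneg hS0 hS0),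
    mul_nonneg (mul_nonneg hS0 hS0) hkZ.le, sq_nonneg S, hα.le]
end

section
/- Let a ∈ ℝ^m with a_j > 0, b ≥ 0, and max_j a_j ≤ k·min_j a_j with 1 ≤ k < 4. Then for all nonnegative vectors ẑ, z ∈ ℝ^m with ∑_j ẑ_j > 0: (∑_j z_j)·(∑_j a_j(ẑ_j − z_j)) ≤ (k/4)·(∑_j ẑ_j)·(b + ∑_j a_j ẑ_j). -/
theorem beta_affine_estimate (m : ℕ) (hm : 0 < m) (a : Fin m → ℝ) (b k : ℝ)
    (ha : ∀ j, 0 < a j) (hb : 0 ≤ b) (hk1 : 1 ≤ k) (hk4 : k < 4)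
    (hasym : ∀ j j', a j ≤ k * a j')
    (zhat z : Fin m → ℝ) (hzhat : ∀ j, 0 ≤ zhat j) (hz : ∀ j, 0 ≤ z j)
    (hpos : 0 < ∑ j, zhat j) :
    (∑ j, z j) * (∑ j, a j * (zhat j - z j)) ≤
      (k / 4) * (∑ j, zhat j) * (b + ∑ j, a j * zhat j) := by
  set Z := ∑ j, z j with hZdef
  set W := ∑ j, zhat j with hWdef
  set A := ∑ j, a j * zhat j with hAdef
  set B := ∑ j, a j * z j with hBdef
  have hZ0 : 0 ≤ Z := Finset.sum_nonneg fun j _ => hz j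
  have hA0 : 0 ≤ A := Finset.sum_nonneg fun j _ => mul_nonneg (ha j).le (hzhat j)
  have hkW : 0 < k * W := mul_pos (lt_of_lt_of_le one_pos hk1) hpos
  have hBj : ∀ j, A / (k * W) ≤ a j := by
    intro j
    rw [div_le_iff₀ hkW]
    calc A = ∑ j', a j' * zhat j' := rfl
      _ ≤ ∑ j', (k * a j) * zhat j' :=
          Finset.sum_le_sum fun j' _ =>
            mul_le_mul_of_nonneg_right (hasym j' j) (hzhat j')
      _ = (k * a j) * W := by rw [hWdef, Finset.mul_sum]
      _ = a j * (k * W) := by ring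
  have hB : (A / (k * W)) * Z ≤ B := by
    rw [hBdef, hZdef, Finset.mul_sum]
    exact Finset.sum_le_sum fun j _ => mul_le_mul_of_nonneg_right (hBj j) (hz j)
  have hAB : A * Z ≤ B * (k * W) := by
    have h := mul_le_mul_of_nonneg_right hB hkW.le
    calc A * Z = (A / (k * W)) * Z * (k * W) := by field_simp
      _ ≤ B * (k * W) := h
  have hsub : ∑ j, a j * (zhat j - z j) = A - B := by
    rw [hAdef, hBdef, ← Finset.sum_sub_distrib]
    exact Finset.sum_congr rfl fun j _ => by ring
  rw [hsub]
  nlinarith [mul_nonneg hA0 (sq_nonneg (2 * Z - k * W)),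
    mul_le_mul_of_nonneg_right hAB hZ0,
    mul_nonneg (mul_nonneg (le_trans zero_le_one hk1) hpos.le) hb,
    mul_nonneg hA0 hZ0, sq_nonneg (k * W)]
end

section
/- Suppose for some constant β with 0 ≤ β < 1, every feasible routing z satisfies ⟨c(ẑ) − c(z), z⟩ ≤ β·⟨c(ẑ), ẑ⟩, and ẑ is a Wardrop equilibrium, meaning ⟨c(ẑ), ẑ⟩ ≤ ⟨c(ẑ), z⟩ for every feasible routing z. Then C(ẑ) ≤ (1/(1−β))·C(z*) for any feasible routing z*, where C(z) = ⟨c(z), z⟩. -/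
theorem geometric_poa (n : ℕ) (Z : Set (Fin n → ℝ)) (c : (Fin n → ℝ) → (Fin n → ℝ))
    (hc : ∀ z ∈ Z, ∀ i, 0 ≤ c z i)
    (β : ℝ) (hβ0 : 0 ≤ β) (hβ1 : β < 1)
    (zhat : Fin n → ℝ) (hzhatZ : zhat ∈ Z)
    (hbeta : ∀ z ∈ Z, (∑ i, (c zhat i - c z i) * z i) ≤ β * ∑ i, c zhat i * zhat i)
    (heq : ∀ z ∈ Z, (∑ i, c zhat i * zhat i) ≤ ∑ i, c zhat i * z i)
    (zstar : Fin n → ℝ) (hzstar : zstar ∈ Z) :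
    (∑ i, c zhat i * zhat i) ≤ (1 / (1 - β)) * ∑ i, c zstar i * zstar i := by
  have h1 := heq zstar hzstar
  have h2 := hbeta zstar hzstar
  have h3 : ∑ i, c zhat i * zstar i =
      (∑ i, c zstar i * zstar i) + ∑ i, (c zhat i - c zstar i) * zstar i := by
    rw [← Finset.sum_add_distrib]; congr 1; ext i; ring
  have key : (1 - β) * (∑ i, c zhat i * zhat i) ≤ ∑ i, c zstar i * zstar i := by
    nlinarith
  rw [div_mul_eq_mul_div, le_div_iff₀ (by linarith)]
  linarith [key]
end

section
/- Let a ∈ ℝ^m with a_1 ≥ a_2 ≥ … ≥ a_m > 0, let ẑ ∈ ℝ^m_{≥0} with S := ∑_j ẑ_j > 0, and let f ≥ 0 with v_{j'−1} ≤ f ≤ v_{j'} where v_{j'} = ∑_{j ≤ j'} ẑ_j. Define ℓ(f) = ∑_{j < j'} a_j ẑ_j + a_{j'}(f − ∑_{j < j'} ẑ_j). Then f·(∑_j a_j ẑ_j − ℓ(f)) ≤ (1/4)·S·(∑_j a_j ẑ_j). -/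
theorem agg_poa_core (m : ℕ) (a zhat : Fin m → ℝ)
    (hsort : Antitone a) (hapos : ∀ j, 0 < a j)
    (hzhat : ∀ j, 0 ≤ zhat j) (hS : 0 < ∑ j, zhat j)
    (j' : Fin m) (f : ℝ) (hf0 : 0 ≤ f)
    (hfl : ∑ j ∈ Finset.Iio j', zhat j ≤ f)
    (hfu : f ≤ ∑ j ∈ Finset.Iic j', zhat j) :
    f * ((∑ j, a j * zhat j) -
        ((∑ j ∈ Finset.Iio j', a j * zhat j) + a j' * (f - ∑ j ∈ Finset.Iio j', zhat j))) ≤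
      (1 / 4) * (∑ j, zhat j) * (∑ j, a j * zhat j) := by
  classical
  have hsplit : ∀ g : Fin m → ℝ,
      ∑ j, g j = ∑ j ∈ Finset.Iio j', g j + g j' + ∑ j ∈ Finset.Ioi j', g j := by
    intro g
    have huniv : (Finset.univ : Finset (Fin m)) = Finset.Iic j' ∪ Finset.Ioi j' := by
      ext x; simp [le_or_gt]
    have hdisj : Disjoint (Finset.Iic j') (Finset.Ioi j') := by
      simp [Finset.disjoint_left]
    rw [huniv, Finset.sum_union hdisj, ← Finset.Iio_insert,
      Finset.sum_insert (by simp)]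
    ring
  set V := ∑ j ∈ Finset.Iio j', zhat j with hV
  set A := ∑ j ∈ Finset.Iio j', a j * zhat j with hA
  set W := ∑ j ∈ Finset.Ioi j', zhat j with hW
  set T := ∑ j ∈ Finset.Ioi j', a j * zhat j with hT
  set z := zhat j' with hz
  set aj := a j' with haj
  have hSsplit : ∑ j, zhat j = V + z + W := hsplit zhat
  have hLsplit : ∑ j, a j * zhat j = A + aj * z + T := hsplit (fun j => a j * zhat j)
  have hIic : ∑ j ∈ Finset.Iic j', zhat j = z + V := by
    rw [← Finset.Iio_insert, Finset.sum_insert (by simp)]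
  have hAV : aj * V ≤ A := by
    rw [hA, hV, Finset.mul_sum]
    apply Finset.sum_le_sum
    intro i hi
    exact mul_le_mul_of_nonneg_right (hsort (le_of_lt (Finset.mem_Iio.mp hi))) (hzhat i)
  have hTW : T ≤ aj * W := by
    rw [hT, hW, Finset.mul_sum]
    apply Finset.sum_le_sum
    intro i hi
    exact mul_le_mul_of_nonneg_right (hsort (le_of_lt (Finset.mem_Ioi.mp hi))) (hzhat i)
  have hV0 : 0 ≤ V := Finset.sum_nonneg fun i _ => hzhat i
  have hW0 : 0 ≤ W := Finset.sum_nonneg fun i _ => hzhat i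
  have hz0 : 0 ≤ z := hzhat j'
  have hfz : f ≤ V + z := by rw [hIic] at hfu; linarith
  set S := ∑ j, zhat j with hSdef
  set L := ∑ j, a j * zhat j with hLdef
  have hL0 : 0 ≤ L := Finset.sum_nonneg fun i _ =>
    mul_nonneg (le_of_lt (hapos i)) (hzhat i)
  -- key: S * ℓ(f) ≥ f * L
  have hkey : f * L ≤ S * (A + aj * (f - V)) := by
    have h1 : 0 ≤ (z - (f - V)) * (A - aj * V) :=
      mul_nonneg (by linarith) (by linarith)
    have h2 : 0 ≤ f * (aj * W - T) := mul_nonneg hf0 (by linarith)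
    have h3 : 0 ≤ W * (A - aj * V) := mul_nonneg hW0 (by linarith)
    rw [hSsplit, hLsplit]
    nlinarith [h1, h2, h3]
  have hlf : f * (L - (A + aj * (f - V))) ≤ (1 / 4) * S * L := by
    have hsq : 0 ≤ L * (S / 2 - f) ^ 2 := mul_nonneg hL0 (sq_nonneg _)
    have hmul : f * (f * L) ≤ f * (S * (A + aj * (f - V))) :=
      mul_le_mul_of_nonneg_left hkey hf0
    nlinarith [hS, hsq, hmul]
  exact hlf
end
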